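/- arXiv:1606.05834 — 6 statements merged into one kernel-verified Lean document; each statement's English description precedes it below -/
import Mathlib

section
/- Let f : ℝ³ → ℝ³ be the vector field f(x₁,x₂,x₃) = (x₂, −x₃x₁, 0) and, for strictly positive reals k and ℓ, let P : ℝ³ → ℝ³ˣ³ be the symmetric matrix-valued map with P(x) = [[1 + 2ℓk² + 4ℓ²x₁², −2ℓk, 2ℓx₁], [−2ℓk, 2ℓ, 0], [2ℓx₁, 0, 1]]. Then for every x ∈ ℝ³ and every vector v = (v₁,v₂,v₃) with v₁ = 0, the Lie derivative of P along f satisfies vᵀ (L_f P)(x) v = −4ℓk v₂², where L_f P(x) = DP(x)[f(x)] + P(x)·Df(x) + Df(x)ᵀ·P(x), with DP(x)[f(x)] denoting the directional derivative of P at x in direction f(x). -/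
open Matrix

noncomputable def jac {n m : ℕ} (g : (Fin n → ℝ) → (Fin m → ℝ)) (x : Fin n → ℝ) :
    Matrix (Fin m) (Fin n) ℝ :=
  Matrix.of fun i j => fderiv ℝ (fun y => g y i) x (Pi.single j 1)

/-- Lie derivative of a symmetric matrix-valued map `P` along a vector field `f`:
`L_f P(x) = DP(x)[f(x)] + P(x)·Df(x) + Df(x)ᵀ·P(x)`. -/
noncomputable def lieD {n : ℕ} (f : (Fin n → ℝ) → (Fin n → ℝ))
    (P : (Fin n → ℝ) → Matrix (Fin n) (Fin n) ℝ) (x : Fin n → ℝ) :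
    Matrix (Fin n) (Fin n) ℝ :=
  (Matrix.of fun i j => fderiv ℝ (fun y => P y i j) x (f x))
    + P x * jac f x + (jac f x)ᵀ * P x


lemma hproj (i : Fin 3) (x : Fin 3 → ℝ) :
    HasFDerivAt (fun y : Fin 3 → ℝ => y i)
      (ContinuousLinearMap.proj (R := ℝ) (φ := fun _ : Fin 3 => ℝ) i) x :=
  (ContinuousLinearMap.proj (R := ℝ) (φ := fun _ : Fin 3 => ℝ) i).hasFDerivAt

lemma fd_proj (i : Fin 3) (x w : Fin 3 → ℝ) :
    fderiv ℝ (fun y : Fin 3 → ℝ => y i) x w = w i := by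
  rw [(hproj i x).fderiv]; rfl

lemma fd_mul (x w : Fin 3 → ℝ) :
    fderiv ℝ (fun y : Fin 3 → ℝ => -(y 2) * y 0) x w = -(w 2) * x 0 + -(x 2) * w 0 := by
  have h : HasFDerivAt (fun y : Fin 3 → ℝ => -(y 2) * y 0) _ x := ((hproj 2 x).neg.mul (hproj 0 x))
  rw [h.fderiv]
  simp
  ring

lemma fd_mul2 (x w : Fin 3 → ℝ) :
    fderiv ℝ (fun y : Fin 3 → ℝ => y 2 * y 0) x w = w 2 * x 0 + x 2 * w 0 := by
  have h : HasFDerivAt (fun y : Fin 3 → ℝ => y 2 * y 0) _ x := ((hproj 2 x).mul (hproj 0 x))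
  rw [h.fderiv]
  simp
  ring

theorem stmt0 (k ℓ : ℝ) (hk : 0 < k) (hl : 0 < ℓ)
    (f : (Fin 3 → ℝ) → (Fin 3 → ℝ))
    (hf : ∀ x, f x = ![x 1, -(x 2) * x 0, 0])
    (P : (Fin 3 → ℝ) → Matrix (Fin 3) (Fin 3) ℝ)
    (hP : ∀ x, P x =
      !![1 + 2*ℓ*k^2 + 4*ℓ^2*(x 0)^2, -(2*ℓ*k), 2*ℓ*(x 0);
         -(2*ℓ*k), 2*ℓ, 0;
         2*ℓ*(x 0), 0, 1]) :
    ∀ (x v : Fin 3 → ℝ), v 0 = 0 →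
      v ⬝ᵥ (lieD f P x *ᵥ v) = -(4*ℓ*k) * (v 1)^2 := by
  intro x v hv
  have h0 : (fun y => f y 0) = fun y : Fin 3 → ℝ => y 1 := by funext y; rw [hf]; simp
  have h1 : (fun y => f y 1) = fun y : Fin 3 → ℝ => -(y 2) * y 0 := by funext y; rw [hf]; simp
  have h2 : (fun y => f y 2) = fun _ : Fin 3 → ℝ => (0:ℝ) := by funext y; rw [hf]; simp
  have hjac : jac f x = !![0,1,0; -(x 2),0,-(x 0); (0:ℝ),0,0] := by
    ext i j
    fin_cases i <;> fin_cases j <;>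
      simp [jac, h0, h1, h2, fd_proj, fd_mul, fd_mul2, Pi.single_apply,
        Matrix.vecHead, Matrix.vecTail]
  have p11 : (fun y => P y 1 1) = fun _ : Fin 3 → ℝ => 2*ℓ := by funext y; rw [hP]; simp
  have p12 : (fun y => P y 1 2) = fun _ : Fin 3 → ℝ => (0:ℝ) := by funext y; rw [hP]; simp
  have p21 : (fun y => P y 2 1) = fun _ : Fin 3 → ℝ => (0:ℝ) := by funext y; rw [hP]; simp
  have p22 : (fun y => P y 2 2) = fun _ : Fin 3 → ℝ => (1:ℝ) := by funext y; rw [hP]; simp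
  rw [lieD, hjac, hP]
  simp [dotProduct, mulVec, Matrix.mul_apply, Fin.sum_univ_three, hv,
    Matrix.vecHead, Matrix.vecTail, p11, p12, p21, p22]
  ring
end

section
/- Let k, ℓ > 0 and P : ℝ³ → ℝ³ˣ³ be given by P(x) = [[1 + 2ℓk² + 4ℓ²x₁², −2ℓk, 2ℓx₁], [−2ℓk, 2ℓ, 0], [2ℓx₁, 0, 1]], and let φ(x₁,x₂,x₃) = (x₁, x₂ − kx₁, x₃ + ℓx₁²) with Jacobian Dφ(x). Then for every x ∈ ℝ³, (Dφ(x)⁻¹)ᵀ P(x) Dφ(x)⁻¹ = diag(1, 2ℓ, 1), i.e., the expression of the metric P in the coordinates defined by φ is the constant diagonal matrix diag(1, 2ℓ, 1). -/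
/-
The metric P is the pullback under φ of the constant metric D = diag(1, 2ℓ, 1), i.e.
P(x) = Dφ(x)ᵀ D Dφ(x); since Dφ(x) is unipotent lower triangular, hence invertible,
conjugating by its inverse recovers D.
-/

open Matrix

theorem Matrix.transpose_inv_mul_transpose_mul_mul_mul_inv {n R : Type*} [Fintype n]
    [DecidableEq n] [CommRing R] (J D : Matrix n n R) (hJ : IsUnit J.det) :
    J⁻¹ᵀ * (Jᵀ * D * J) * J⁻¹ = D := by
  rw [transpose_nonsing_inv, Matrix.mul_assoc, Matrix.mul_assoc, mul_nonsing_inv _ hJ,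
    Matrix.mul_one, ← Matrix.mul_assoc, nonsing_inv_mul _ (by rwa [det_transpose]),
    Matrix.one_mul]

theorem jac_apply_of_hasFDerivAt {n m : ℕ} {g : (Fin n → ℝ) → (Fin m → ℝ)} {x : Fin n → ℝ}
    {i : Fin m} {L : (Fin n → ℝ) →L[ℝ] ℝ} (h : HasFDerivAt (fun y => g y i) L x) (j : Fin n) :
    jac g x i j = L (Pi.single j 1) := by
  rw [jac, of_apply, h.fderiv]

def shearMatrix (k c : ℝ) : Matrix (Fin 3) (Fin 3) ℝ :=
  !![1, 0, 0; -k, 1, 0; c, 0, 1]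

theorem det_shearMatrix (k c : ℝ) : (shearMatrix k c).det = 1 := by
  simp [shearMatrix, det_fin_three]

theorem jac_shear (k ℓ : ℝ) (x : Fin 3 → ℝ) :
    jac (fun y : Fin 3 → ℝ => ![y 0, y 1 - k * y 0, y 2 + ℓ * y 0 ^ 2]) x
      = shearMatrix k (2 * ℓ * x 0) := by
  have hproj (i : Fin 3) := hasFDerivAt_apply (𝕜 := ℝ) i x
  ext i j
  fin_cases i
  · refine (jac_apply_of_hasFDerivAt (i := 0) (hproj 0) j).trans ?_
    fin_cases j <;> simp [shearMatrix]
  · refine (jac_apply_of_hasFDerivAt (i := 1) ((hproj 1).sub ((hproj 0).const_mul k)) j).trans ?_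
    fin_cases j <;> simp [shearMatrix]
  · refine (jac_apply_of_hasFDerivAt (i := 2)
      ((hproj 2).add (((hproj 0).pow 2).const_mul ℓ)) j).trans ?_
    fin_cases j <;> simp [shearMatrix]
    ring

theorem metric_eq_transpose_shearMatrix_mul_diagonal_mul_shearMatrix (k ℓ a : ℝ) :
    !![1 + 2*ℓ*k^2 + 4*ℓ^2*a^2, -(2*ℓ*k), 2*ℓ*a;
        -(2*ℓ*k), 2*ℓ, 0;
        2*ℓ*a, 0, 1]
      = (shearMatrix k (2 * ℓ * a))ᵀ * diagonal ![1, 2*ℓ, 1] * shearMatrix k (2 * ℓ * a) := by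
  ext i j
  fin_cases i <;> fin_cases j <;> simp [shearMatrix, mul_apply, Fin.sum_univ_three] <;> ring

theorem stmt3_general (k ℓ : ℝ)
    (P : (Fin 3 → ℝ) → Matrix (Fin 3) (Fin 3) ℝ)
    (hP : ∀ x, P x =
      !![1 + 2*ℓ*k^2 + 4*ℓ^2*(x 0)^2, -(2*ℓ*k), 2*ℓ*(x 0);
         -(2*ℓ*k), 2*ℓ, 0;
         2*ℓ*(x 0), 0, 1])
    (φ : (Fin 3 → ℝ) → (Fin 3 → ℝ))
    (hφ : ∀ x, φ x = ![x 0, x 1 - k * x 0, x 2 + ℓ * (x 0)^2]) :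
    ∀ x : Fin 3 → ℝ,
      ((jac φ x)⁻¹)ᵀ * P x * (jac φ x)⁻¹ = Matrix.diagonal ![1, 2*ℓ, 1] := by
  intro x
  have hJ : jac φ x = shearMatrix k (2 * ℓ * x 0) := by
    rw [funext hφ]
    exact jac_shear k ℓ x
  have hdet : IsUnit (jac φ x).det := by
    rw [hJ, det_shearMatrix]
    exact isUnit_one
  rw [hP, metric_eq_transpose_shearMatrix_mul_diagonal_mul_shearMatrix, ← hJ]
  exact transpose_inv_mul_transpose_mul_mul_mul_inv _ _ hdet

theorem stmt3 (k ℓ : ℝ) (hk : 0 < k) (hl : 0 < ℓ)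
    (P : (Fin 3 → ℝ) → Matrix (Fin 3) (Fin 3) ℝ)
    (hP : ∀ x, P x =
      !![1 + 2*ℓ*k^2 + 4*ℓ^2*(x 0)^2, -(2*ℓ*k), 2*ℓ*(x 0);
         -(2*ℓ*k), 2*ℓ, 0;
         2*ℓ*(x 0), 0, 1])
    (φ : (Fin 3 → ℝ) → (Fin 3 → ℝ))
    (hφ : ∀ x, φ x = ![x 0, x 1 - k * x 0, x 2 + ℓ * (x 0)^2]) :
    ∀ x : Fin 3 → ℝ,
      ((jac φ x)⁻¹)ᵀ * P x * (jac φ x)⁻¹ = Matrix.diagonal ![1, 2*ℓ, 1] :=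
  stmt3_general k ℓ P hP φ hφ
end

section
/- Let f_ξ : ℝ × ℝ² → ℝ² be defined (for parameters k, ℓ > 0) by f_ξ(y, (ξ₁, ξ₂)) = (−y(ξ₂ − ℓy²) − k(ξ₁ + ky), 2ℓy(ξ₁ + ky)), and let Q = diag(2ℓ, 1). Then for every y ∈ ℝ, Q · (∂f_ξ/∂ξ)(y,ξ) + (∂f_ξ/∂ξ)(y,ξ)ᵀ · Q = [[−4ℓk, 0],[0, 0]], which is negative semidefinite. -/
open Matrix

lemma affine_fderiv (a b c : ℝ) (ξ : Fin 2 → ℝ) (j : Fin 2) :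
    fderiv ℝ (fun z : Fin 2 → ℝ => a * z 0 + b * z 1 + c) ξ (Pi.single j 1)
      = a * (Pi.single j 1 : Fin 2 → ℝ) 0 + b * (Pi.single j 1 : Fin 2 → ℝ) 1 := by
  have h0 : HasFDerivAt (fun z : Fin 2 → ℝ => z 0)
      (ContinuousLinearMap.proj 0 : (Fin 2 → ℝ) →L[ℝ] ℝ) ξ := hasFDerivAt_apply 0 ξ
  have h1 : HasFDerivAt (fun z : Fin 2 → ℝ => z 1)
      (ContinuousLinearMap.proj 1 : (Fin 2 → ℝ) →L[ℝ] ℝ) ξ := hasFDerivAt_apply 1 ξ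
  have h : HasFDerivAt (fun z : Fin 2 → ℝ => a * z 0 + b * z 1 + c)
      (a • (ContinuousLinearMap.proj 0 : (Fin 2 → ℝ) →L[ℝ] ℝ)
        + b • (ContinuousLinearMap.proj 1 : (Fin 2 → ℝ) →L[ℝ] ℝ)) ξ :=
    ((h0.const_mul a).add (h1.const_mul b)).add_const c
  rw [h.fderiv]
  simp [ContinuousLinearMap.proj]

/-- Jacobian of `ξ ↦ fξ y ξ` with respect to `ξ`. -/
noncomputable def jacξ (fξ : ℝ → (Fin 2 → ℝ) → (Fin 2 → ℝ)) (y : ℝ) (ξ : Fin 2 → ℝ) :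
    Matrix (Fin 2) (Fin 2) ℝ :=
  Matrix.of fun i j => fderiv ℝ (fun z => fξ y z i) ξ (Pi.single j 1)

theorem stmt4 (k ℓ : ℝ) (hk : 0 < k) (hl : 0 < ℓ)
    (fξ : ℝ → (Fin 2 → ℝ) → (Fin 2 → ℝ))
    (hfξ : ∀ y ξ, fξ y ξ =
      ![-(y) * (ξ 1 - ℓ * y^2) - k * (ξ 0 + k * y), 2 * ℓ * y * (ξ 0 + k * y)])
    (Q : Matrix (Fin 2) (Fin 2) ℝ) (hQ : Q = Matrix.diagonal ![2*ℓ, 1]) :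
    ∀ (y : ℝ) (ξ : Fin 2 → ℝ),
      Q * jacξ fξ y ξ + (jacξ fξ y ξ)ᵀ * Q = !![-(4*ℓ*k), 0; 0, 0] ∧
      ∀ v : Fin 2 → ℝ,
        v ⬝ᵥ ((Q * jacξ fξ y ξ + (jacξ fξ y ξ)ᵀ * Q) *ᵥ v) ≤ 0 := by
  intro y ξ
  have key : jacξ fξ y ξ = !![-k, -y; 2*ℓ*y, 0] := by
    ext i j
    have e0 : (fun z : Fin 2 → ℝ => fξ y z 0)
        = fun z : Fin 2 → ℝ => (-k) * z 0 + (-y) * z 1 + (y * (ℓ * y^2) - k * (k * y)) := by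
      funext z; rw [hfξ]; simp; ring
    have e1 : (fun z : Fin 2 → ℝ => fξ y z 1)
        = fun z : Fin 2 → ℝ => (2*ℓ*y) * z 0 + 0 * z 1 + (2*ℓ*y*(k*y)) := by
      funext z; rw [hfξ]; simp; ring
    fin_cases i <;> fin_cases j <;>
      · simp only [jacξ, Matrix.of_apply, Fin.isValue, Fin.zero_eta, Fin.mk_one]
        first
          | (rw [e0, affine_fderiv]; simp)
          | (rw [e1, affine_fderiv]; simp)
  have hM : Q * jacξ fξ y ξ + (jacξ fξ y ξ)ᵀ * Q = !![-(4*ℓ*k), 0; 0, 0] := by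
    rw [key, hQ]
    ext i j
    fin_cases i <;> fin_cases j <;>
      simp [Matrix.mul_apply, Fin.sum_univ_two, Matrix.diagonal, Matrix.vecHead, Matrix.vecTail] <;> ring
  refine ⟨hM, fun v => ?_⟩
  rw [hM]
  simp [dotProduct, Matrix.mulVec, Fin.sum_univ_two]
  nlinarith [sq_nonneg (v 0), mul_pos hl hk]
end

section
/- Let n_o ≥ 1, m ≥ 1, and define the block matrices 𝒜 ∈ ℝ^{(m·n_o)×(m·n_o)} (the upper shift: 𝒜 has identity blocks I_m on its first superdiagonal and zeros elsewhere), ℬ ∈ ℝ^{(m·n_o)×m} (all blocks zero except the last, equal to I_m), and 𝒞 ∈ ℝ^{m×(m·n_o)} (first block I_m, rest zero). Then for every ν > 0 there exist a symmetric positive definite matrix 𝒫 ∈ ℝ^{(m·n_o)×(m·n_o)}, a matrix 𝒦 ∈ ℝ^{(m·n_o)×m}, and a strictly positive real q such that 𝒫(𝒜 − 𝒦𝒞) + (𝒜 − 𝒦𝒞)ᵀ𝒫 + 2q I + (1/(qν²)) 𝒫 ℬ ℬᵀ 𝒫 ≤ 0 (in the sense of negative semidefiniteness). -/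
/-!
The system consists of `m` uncoupled copies of the chain of integrators `ẋᵢ = xᵢ₊₁`, `i ≤ n`
(shift matrix `N`, output `e₀ᵀ`, input `eₙ`), so `𝒫` is taken block diagonal with one block `S`
per copy and `𝒦 = 𝒫⁻¹𝒞ᵀ`, which turns `𝒫(𝒜 - 𝒦𝒞) + (𝒜 - 𝒦𝒞)ᵀ𝒫` into `𝒫𝒜 + 𝒜ᵀ𝒫 - 2𝒞ᵀ𝒞`.

For the chain, `S N + Nᵀ S + t⁻¹ S = e₀e₀ᵀ` has the explicit solution
`S i j = (-1)^(i+j) C(i+j, i) t^(i+j+1)`. By Vandermonde's identity `S = t (LᵀD)ᵀ(LᵀD)` with `L`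
Pascal's unimodular triangle and `D = diag((-t)^j)`, so `S ≥ c t^(2n+1)` for `t ≤ 1`, and
Cauchy–Schwarz for this Gram matrix gives `(eₙ ⬝ S u)² ≤ C(2n, n) t^(2n+1) (u ⬝ S u)`.
The Riccati form reduces to `-t⁻¹ S - e₀e₀ᵀ + 2q + (qν²)⁻¹ S eₙeₙᵀ S`; with `q = c t^(2n) / 4` and
`8 C(2n, n) t² ≤ c ν²` each of the last two terms is at most `(2t)⁻¹ S`.
-/

open Matrix

/-- Block upper-shift matrix 𝒜 in prime (Brunovsky) form, with `I_m` blocks on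
the first block superdiagonal. Indices are pairs (block, coordinate-in-block). -/
def primeA (n_o m : ℕ) : Matrix (Fin n_o × Fin m) (Fin n_o × Fin m) ℝ :=
  Matrix.of fun p q => if (p.1 : ℕ) + 1 = (q.1 : ℕ) ∧ p.2 = q.2 then 1 else 0

/-- Block matrix ℬ: all blocks zero except the last one, equal to `I_m`. -/
def primeB (n_o m : ℕ) : Matrix (Fin n_o × Fin m) (Fin m) ℝ :=
  Matrix.of fun p j => if (p.1 : ℕ) = n_o - 1 ∧ p.2 = j then 1 else 0

/-- Block matrix 𝒞: first block `I_m`, remaining blocks zero. -/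
def primeC (n_o m : ℕ) : Matrix (Fin m) (Fin n_o × Fin m) ℝ :=
  Matrix.of fun i q => if (q.1 : ℕ) = 0 ∧ q.2 = i then 1 else 0

namespace Matrix

variable {k l o R : Type*} [Fintype k] [Fintype l] [Fintype o]

theorem dotProduct_blockDiagonal_mulVec [CommSemiring R] [DecidableEq o] (M : o → Matrix k k R)
    (v : k × o → R) :
    v ⬝ᵥ (blockDiagonal M *ᵥ v) = ∑ b, (fun i => v (i, b)) ⬝ᵥ (M b *ᵥ fun i => v (i, b)) := by
  simp only [dotProduct, mulVec, Fintype.sum_prod_type, blockDiagonal_apply, ite_mul, zero_mul,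
    Finset.sum_ite_eq, Finset.mem_univ, if_true]
  exact Finset.sum_comm

theorem PosDef.blockDiagonal [DecidableEq o] {M : o → Matrix k k ℝ} (hM : ∀ b, (M b).PosDef) :
    (blockDiagonal M).PosDef := by
  refine .of_dotProduct_mulVec_pos ?_ fun v hv => ?_
  · rw [IsHermitian, blockDiagonal_conjTranspose]
    exact congrArg _ (funext fun b => (hM b).isHermitian.eq)
  · obtain ⟨⟨i, b⟩, hib⟩ := Function.ne_iff.mp hv
    rw [star_trivial, dotProduct_blockDiagonal_mulVec]
    refine Finset.sum_pos' (fun b _ => ?_) ⟨b, Finset.mem_univ _, ?_⟩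
    · simpa using (hM b).posSemidef.dotProduct_mulVec_nonneg (fun i => v (i, b))
    · simpa using (hM b).dotProduct_mulVec_pos (x := fun i => v (i, b))
        (Function.ne_iff.mpr ⟨i, hib⟩)

theorem dotProduct_transpose_mul_mulVec [CommSemiring R] (F : Matrix l k R) (x y : k → R) :
    x ⬝ᵥ ((Fᵀ * F) *ᵥ y) = (F *ᵥ x) ⬝ᵥ (F *ᵥ y) := by
  rw [← mulVec_mulVec, dotProduct_mulVec, vecMul_transpose]

theorem dotProduct_vecMulVec_self_mulVec [CommSemiring R] (x u : k → R) :
    u ⬝ᵥ (vecMulVec x x *ᵥ u) = (x ⬝ᵥ u) ^ 2 := by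
  simp only [vecMulVec_mulVec, op_smul_eq_smul, smul_dotProduct, smul_eq_mul, dotProduct_comm u, sq]

theorem dotProduct_mul_vecMulVec_self_mul_mulVec [CommSemiring R] {S : Matrix k k R}
    (hS : Sᵀ = S) (x u : k → R) :
    u ⬝ᵥ ((S * vecMulVec x x * S) *ᵥ u) = (x ⬝ᵥ (S *ᵥ u)) ^ 2 := by
  have hsymm : u ⬝ᵥ (S *ᵥ x) = x ⬝ᵥ (S *ᵥ u) := by
    rw [dotProduct_mulVec, ← mulVec_transpose, hS, dotProduct_comm]
  simp only [← mulVec_mulVec, vecMulVec_mulVec, op_smul_eq_smul, mulVec_smul, dotProduct_smul,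
    smul_eq_mul, hsymm, sq]

theorem mul_sub_inv_mul_add_transpose_mul [CommRing R] [DecidableEq k] {P : Matrix k k R}
    (hPt : Pᵀ = P) (hP : IsUnit P.det) (A : Matrix k k R) (C : Matrix l k R) :
    P * (A - P⁻¹ * Cᵀ * C) + (A - P⁻¹ * Cᵀ * C)ᵀ * P = P * A + Aᵀ * P - 2 • (Cᵀ * C) := by
  have hK : (P⁻¹ * Cᵀ * C)ᵀ * P = Cᵀ * C := by
    rw [transpose_mul, transpose_mul, transpose_nonsing_inv, hPt, transpose_transpose,
      Matrix.mul_assoc, nonsing_inv_mul_cancel_right _ _ hP]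
  rw [Matrix.mul_sub, transpose_sub, Matrix.sub_mul, hK, ← Matrix.mul_assoc, ← Matrix.mul_assoc,
    mul_nonsing_inv _ hP, Matrix.one_mul, two_nsmul]
  abel

section LinearOrderedField

variable [Field R] [LinearOrder R] [IsStrictOrderedRing R]

theorem sq_dotProduct_le (x y : k → R) : (x ⬝ᵥ y) ^ 2 ≤ (x ⬝ᵥ x) * (y ⬝ᵥ y) := by
  simpa only [dotProduct, sq] using Finset.sum_mul_sq_le_sq_mul_sq Finset.univ x y

theorem mulVec_dotProduct_mulVec_le (X : Matrix l k R) (y : k → R) :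
    (X *ᵥ y) ⬝ᵥ (X *ᵥ y) ≤ (∑ i, X i ⬝ᵥ X i) * (y ⬝ᵥ y) := by
  rw [dotProduct, Finset.sum_mul]
  exact Finset.sum_le_sum fun i _ => by simpa [mulVec, sq] using sq_dotProduct_le (X i) y

theorem exists_pos_mul_dotProduct_self_le_of_isUnit_det [DecidableEq k] {X : Matrix k k R}
    (hX : IsUnit X.det) : ∃ c > 0, ∀ y, c * (y ⬝ᵥ y) ≤ (X *ᵥ y) ⬝ᵥ (X *ᵥ y) := by
  have hN : 0 ≤ ∑ i, X⁻¹ i ⬝ᵥ X⁻¹ i :=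
    Finset.sum_nonneg fun i _ => Finset.sum_nonneg fun j _ => mul_self_nonneg _
  refine ⟨(∑ i, X⁻¹ i ⬝ᵥ X⁻¹ i + 1)⁻¹, by positivity, fun y => ?_⟩
  have h := mulVec_dotProduct_mulVec_le X⁻¹ (X *ᵥ y)
  rw [mulVec_mulVec, nonsing_inv_mul _ hX, one_mulVec] at h
  have hXy : 0 ≤ (X *ᵥ y) ⬝ᵥ (X *ᵥ y) := Finset.sum_nonneg fun j _ => mul_self_nonneg _
  rw [inv_mul_le_iff₀ (by positivity)]
  nlinarith

end LinearOrderedField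

end Matrix

theorem Fin.sum_ite_val_add_one_eq {n : ℕ} (g : ℕ → ℝ) (j : Fin n) :
    (∑ k : Fin n, if (k : ℕ) + 1 = j then g k else 0) = if (j : ℕ) = 0 then 0 else g (j - 1) := by
  rw [Fin.sum_univ_eq_sum_range (fun k => if k + 1 = (j : ℕ) then g k else 0)]
  obtain ⟨_ | j, hj⟩ := j
  · simp
  · simp [show j < n by omega]

theorem Nat.sum_range_choose_mul_choose (i j N : ℕ) (hj : j < N) :
    ∑ k ∈ Finset.range N, i.choose k * j.choose k = (i + j).choose j := by
  rw [Nat.add_choose_eq, Finset.Nat.sum_antidiagonal_eq_sum_range_succ_mk,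
    ← Finset.sum_subset (Finset.range_subset_range.2 hj) fun k _ hk => ?_]
  · refine Finset.sum_congr rfl fun k hk => ?_
    rw [Nat.choose_symm (Finset.mem_range_succ_iff.mp hk)]
  · rw [Nat.choose_eq_zero_of_lt (n := j) (by simp at hk; omega), mul_zero]

def shiftMatrix (n : ℕ) : Matrix (Fin n) (Fin n) ℝ :=
  of fun i j => if (i : ℕ) + 1 = j then 1 else 0

theorem of_mul_shiftMatrix_apply {n : ℕ} (f : ℕ → ℕ → ℝ) (i j : Fin n) :
    ((of fun i j : Fin n => f i j) * shiftMatrix n) i j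
      = if (j : ℕ) = 0 then 0 else f i (j - 1) := by
  simp [mul_apply, shiftMatrix, Fin.sum_ite_val_add_one_eq (f i)]

theorem shiftMatrix_transpose_mul_of_apply {n : ℕ} (f : ℕ → ℕ → ℝ) (i j : Fin n) :
    ((shiftMatrix n)ᵀ * of fun i j : Fin n => f i j) i j
      = if (i : ℕ) = 0 then 0 else f (i - 1) j := by
  simp [mul_apply, shiftMatrix, Fin.sum_ite_val_add_one_eq (f · j)]

/-- The weighted observability Gramian `∫₀^∞ e^(-s/t) e^(-Nᵀs) e₀e₀ᵀ e^(-Ns) ds` of the chain in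
closed form: its `(i, j)` entry is `∫₀^∞ e^(-s/t) (-s)^(i+j) / (i! j!) ds`. -/
def lyapunovEntry (t : ℝ) (i j : ℕ) : ℝ :=
  (-1) ^ (i + j) * ((i + j).choose i : ℝ) * t ^ (i + j + 1)

def lyapunovSolution (n : ℕ) (t : ℝ) : Matrix (Fin n) (Fin n) ℝ :=
  of fun i j => lyapunovEntry t i j

theorem lyapunovEntry_pascal {t : ℝ} (ht : t ≠ 0) (i j : ℕ) :
    (if j = 0 then 0 else lyapunovEntry t i (j - 1))
      + (if i = 0 then 0 else lyapunovEntry t (i - 1) j) + t⁻¹ * lyapunovEntry t i j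
      = if i = 0 ∧ j = 0 then 1 else 0 := by
  rcases i with _ | i <;> rcases j with _ | j <;> simp [lyapunovEntry]
  · exact inv_mul_cancel₀ ht
  · field_simp
    ring
  · field_simp
    ring
  · rw [show i + 1 + (j + 1) = i + j + 1 + 1 by omega, Nat.choose_succ_succ,
      show i + 1 + j = i + j + 1 by omega, show i + (j + 1) = i + j + 1 by omega]
    field_simp
    push_cast
    ring

theorem lyapunovSolution_mul_shiftMatrix_add {t : ℝ} (ht : t ≠ 0) (n : ℕ) :
    lyapunovSolution (n + 1) t * shiftMatrix (n + 1)
      + (shiftMatrix (n + 1))ᵀ * lyapunovSolution (n + 1) t + t⁻¹ • lyapunovSolution (n + 1) t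
      = vecMulVec (Pi.single 0 1) (Pi.single 0 1) := by
  ext i j
  rw [lyapunovSolution, Matrix.add_apply, Matrix.add_apply, of_mul_shiftMatrix_apply,
    shiftMatrix_transpose_mul_of_apply, Matrix.smul_apply, of_apply, smul_eq_mul,
    lyapunovEntry_pascal ht]
  simp only [vecMulVec_apply, Pi.single_apply, Fin.val_eq_zero_iff, ite_and, mul_ite, mul_one,
    mul_zero]
  split_ifs <;> rfl

def pascalLower (n : ℕ) : Matrix (Fin n) (Fin n) ℝ :=
  of fun i j => ((i : ℕ).choose j : ℝ)

theorem pascalLower_det (n : ℕ) : (pascalLower n).det = 1 := by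
  rw [det_of_isLowerTriangular _ fun i j hij => ?_]
  · simp [pascalLower]
  · exact Nat.cast_eq_zero.2 (Nat.choose_eq_zero_of_lt (OrderDual.toDual_lt_toDual.1 hij))

def pascalFactor (n : ℕ) (t : ℝ) : Matrix (Fin n) (Fin n) ℝ :=
  (pascalLower n)ᵀ * diagonal fun j : Fin n => (-t) ^ (j : ℕ)

theorem pascalFactor_apply (n : ℕ) (t : ℝ) (k j : Fin n) :
    pascalFactor n t k j = ((j : ℕ).choose k : ℝ) * (-t) ^ (j : ℕ) := by
  simp [pascalFactor, pascalLower, mul_diagonal]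

theorem lyapunovSolution_eq_smul_transpose_mul (n : ℕ) (t : ℝ) :
    lyapunovSolution n t = t • ((pascalFactor n t)ᵀ * pascalFactor n t) := by
  ext i j
  have hsum : (∑ k : Fin n, ((i : ℕ).choose k : ℝ) * ((j : ℕ).choose k))
      = ((i + j : ℕ).choose i : ℝ) := by
    rw [Fin.sum_univ_eq_sum_range (fun k => ((i : ℕ).choose k : ℝ) * ((j : ℕ).choose k)),
      Nat.choose_symm_add]
    exact_mod_cast Nat.sum_range_choose_mul_choose i j n j.isLt
  rw [lyapunovSolution, of_apply, Matrix.smul_apply, mul_apply, lyapunovEntry, ← hsum]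
  simp only [transpose_apply, pascalFactor_apply, smul_eq_mul, Finset.mul_sum, Finset.sum_mul]
  refine Finset.sum_congr rfl fun k _ => ?_
  rw [neg_pow, neg_pow]
  ring

theorem lyapunovSolution_transpose (n : ℕ) (t : ℝ) :
    (lyapunovSolution n t)ᵀ = lyapunovSolution n t := by
  rw [lyapunovSolution_eq_smul_transpose_mul, transpose_smul, transpose_mul, transpose_transpose]

theorem exists_pos_mul_dotProduct_le_lyapunovSolution (n : ℕ) :
    ∃ c > 0, ∀ t, 0 < t → t ≤ 1 → ∀ u : Fin (n + 1) → ℝ,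
      c * t ^ (2 * n + 1) * (u ⬝ᵥ u) ≤ u ⬝ᵥ (lyapunovSolution (n + 1) t *ᵥ u) := by
  obtain ⟨c, hc, hL⟩ := exists_pos_mul_dotProduct_self_le_of_isUnit_det
    (X := (pascalLower (n + 1))ᵀ) (by simp [pascalLower_det])
  refine ⟨c, hc, fun t ht0 ht1 u => ?_⟩
  set w : Fin (n + 1) → ℝ := fun j => (-t) ^ (j : ℕ) * u j
  have hw : t ^ (2 * n) * (u ⬝ᵥ u) ≤ w ⬝ᵥ w := by
    simp only [dotProduct, Finset.mul_sum, w]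
    refine Finset.sum_le_sum fun j _ => ?_
    calc t ^ (2 * n) * (u j * u j) ≤ t ^ (2 * (j : ℕ)) * (u j * u j) :=
          mul_le_mul_of_nonneg_right (pow_le_pow_of_le_one ht0.le ht1 (by omega))
            (mul_self_nonneg _)
      _ = (-t) ^ (j : ℕ) * u j * ((-t) ^ (j : ℕ) * u j) := by
          rw [pow_mul, ← neg_sq t, ← pow_mul, pow_mul']
          ring
  have hF : pascalFactor (n + 1) t *ᵥ u = (pascalLower (n + 1))ᵀ *ᵥ w := by
    rw [pascalFactor, ← mulVec_mulVec]
    exact congrArg _ (funext fun j => mulVec_diagonal _ _ j)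
  rw [lyapunovSolution_eq_smul_transpose_mul, smul_mulVec, dotProduct_smul, smul_eq_mul,
    dotProduct_transpose_mul_mulVec, hF]
  calc c * t ^ (2 * n + 1) * (u ⬝ᵥ u) = t * (c * (t ^ (2 * n) * (u ⬝ᵥ u))) := by ring
    _ ≤ t * (c * (w ⬝ᵥ w)) := by gcongr
    _ ≤ t * (((pascalLower (n + 1))ᵀ *ᵥ w) ⬝ᵥ ((pascalLower (n + 1))ᵀ *ᵥ w)) := by
      gcongr
      exact hL w

theorem lyapunovSolution_posDef (n : ℕ) {t : ℝ} (ht0 : 0 < t) (ht1 : t ≤ 1) :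
    (lyapunovSolution (n + 1) t).PosDef := by
  obtain ⟨c, hc, hlow⟩ := exists_pos_mul_dotProduct_le_lyapunovSolution n
  refine .of_dotProduct_mulVec_pos (by simpa [IsHermitian] using lyapunovSolution_transpose _ t)
    fun u hu => ?_
  have : 0 < u ⬝ᵥ u := by simpa using dotProduct_star_self_pos_iff.2 hu
  rw [star_trivial]
  exact (by positivity : 0 < c * t ^ (2 * n + 1) * (u ⬝ᵥ u)).trans_le (hlow t ht0 ht1 u)

theorem sq_dotProduct_lyapunovSolution_mulVec_le (n : ℕ) (t : ℝ) (x y : Fin n → ℝ) :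
    (x ⬝ᵥ (lyapunovSolution n t *ᵥ y)) ^ 2
      ≤ (x ⬝ᵥ (lyapunovSolution n t *ᵥ x)) * (y ⬝ᵥ (lyapunovSolution n t *ᵥ y)) := by
  simp only [lyapunovSolution_eq_smul_transpose_mul, smul_mulVec, dotProduct_smul, smul_eq_mul,
    dotProduct_transpose_mul_mulVec]
  calc _ = t ^ 2 * ((pascalFactor n t *ᵥ x) ⬝ᵥ (pascalFactor n t *ᵥ y)) ^ 2 := by ring
    _ ≤ t ^ 2 * (((pascalFactor n t *ᵥ x) ⬝ᵥ (pascalFactor n t *ᵥ x))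
          * ((pascalFactor n t *ᵥ y) ⬝ᵥ (pascalFactor n t *ᵥ y))) := by
      gcongr
      exact sq_dotProduct_le _ _
    _ = _ := by ring

theorem single_last_dotProduct_lyapunovSolution_mulVec (n : ℕ) (t : ℝ) :
    Pi.single (Fin.last n) 1 ⬝ᵥ (lyapunovSolution (n + 1) t *ᵥ Pi.single (Fin.last n) 1)
      = ((2 * n).choose n : ℝ) * t ^ (2 * n + 1) := by
  simp [lyapunovSolution, lyapunovEntry, ← two_mul]

theorem dotProduct_riccati_lyapunovSolution_mulVec_nonpos {n : ℕ} {c t ν : ℝ} (hc : 0 < c)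
    (ht0 : 0 < t) (hν : 0 < ν)
    (hlow : ∀ u, c * t ^ (2 * n + 1) * (u ⬝ᵥ u) ≤ u ⬝ᵥ (lyapunovSolution (n + 1) t *ᵥ u))
    (htν : 8 * ((2 * n).choose n : ℝ) * t ^ 2 ≤ c * ν ^ 2) (u : Fin (n + 1) → ℝ) :
    let S := lyapunovSolution (n + 1) t
    let q := c * t ^ (2 * n) / 4
    u ⬝ᵥ ((S * shiftMatrix (n + 1) + (shiftMatrix (n + 1))ᵀ * S
      - 2 • vecMulVec (Pi.single 0 1) (Pi.single 0 1) + (2 * q) • 1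
      + (1 / (q * ν ^ 2))
        • (S * vecMulVec (Pi.single (Fin.last n) 1) (Pi.single (Fin.last n) 1) * S))
        *ᵥ u) ≤ 0 := by
  intro S q
  have hS : Sᵀ = S := lyapunovSolution_transpose _ _
  have hlyap : S * shiftMatrix (n + 1) + (shiftMatrix (n + 1))ᵀ * S
      = vecMulVec (Pi.single 0 1) (Pi.single 0 1) - t⁻¹ • S :=
    eq_sub_of_add_eq (lyapunovSolution_mul_shiftMatrix_add ht0.ne' n)
  have hCS := sq_dotProduct_lyapunovSolution_mulVec_le (n + 1) t (Pi.single (Fin.last n) 1) u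
  rw [single_last_dotProduct_lyapunovSolution_mulVec] at hCS
  rw [hlyap]
  simp only [add_mulVec, sub_mulVec, smul_mulVec, one_mulVec, dotProduct_add, dotProduct_sub,
    dotProduct_smul, smul_eq_mul, two_nsmul, dotProduct_mul_vecMulVec_self_mul_mulVec hS,
    dotProduct_vecMulVec_self_mulVec]
  set f := u ⬝ᵥ (S *ᵥ u)
  have hu : 0 ≤ u ⬝ᵥ u := Finset.sum_nonneg fun j _ => mul_self_nonneg _
  have hf : 0 ≤ f := le_trans (by positivity) (hlow u)
  have hq : 2 * q * (u ⬝ᵥ u) ≤ f / (2 * t) := by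
    rw [le_div_iff₀ (by positivity)]
    calc 2 * q * (u ⬝ᵥ u) * (2 * t) = c * t ^ (2 * n + 1) * (u ⬝ᵥ u) := by ring
      _ ≤ f := hlow u
  have hr : 1 / (q * ν ^ 2) * ((2 * n).choose n * t ^ (2 * n + 1)) ≤ 1 / (2 * t) := by
    rw [div_mul_eq_mul_div, one_mul, div_le_div_iff₀ (by positivity) (by positivity)]
    calc (2 * n).choose n * t ^ (2 * n + 1) * (2 * t)
        = t ^ (2 * n) * (8 * (2 * n).choose n * t ^ 2) / 4 := by ring
      _ ≤ t ^ (2 * n) * (c * ν ^ 2) / 4 := by gcongr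
      _ = 1 * (q * ν ^ 2) := by ring
  have hB : 1 / (q * ν ^ 2) * (Pi.single (Fin.last n) 1 ⬝ᵥ (S *ᵥ u)) ^ 2 ≤ f / (2 * t) :=
    calc _ ≤ 1 / (q * ν ^ 2) * ((2 * n).choose n * t ^ (2 * n + 1) * f) := by gcongr
      _ ≤ 1 / (2 * t) * f := by rw [← mul_assoc]; gcongr
      _ = f / (2 * t) := by ring
  have hsplit : t⁻¹ * f = f / (2 * t) + f / (2 * t) := by field_simp; ring
  linarith [sq_nonneg (Pi.single (0 : Fin (n + 1)) (1 : ℝ) ⬝ᵥ u)]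

theorem exists_posDef_riccati_shiftMatrix (n : ℕ) {ν : ℝ} (hν : 0 < ν) :
    ∃ (S : Matrix (Fin (n + 1)) (Fin (n + 1)) ℝ) (q : ℝ), S.PosDef ∧ 0 < q ∧ ∀ u,
      u ⬝ᵥ ((S * shiftMatrix (n + 1) + (shiftMatrix (n + 1))ᵀ * S
        - 2 • vecMulVec (Pi.single 0 1) (Pi.single 0 1) + (2 * q) • 1
        + (1 / (q * ν ^ 2))
        • (S * vecMulVec (Pi.single (Fin.last n) 1) (Pi.single (Fin.last n) 1) * S))
          *ᵥ u) ≤ 0 := by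
  obtain ⟨c, hc, hlow⟩ := exists_pos_mul_dotProduct_le_lyapunovSolution n
  have hβ : (0 : ℝ) < (2 * n).choose n := Nat.cast_pos.2 (Nat.choose_pos (by omega))
  set t := min 1 (c * ν ^ 2 / (8 * (2 * n).choose n))
  have ht0 : 0 < t := lt_min one_pos (by positivity)
  have ht1 : t ≤ 1 := min_le_left _ _
  have htν : 8 * ((2 * n).choose n : ℝ) * t ^ 2 ≤ c * ν ^ 2 := by
    have : t ≤ c * ν ^ 2 / (8 * (2 * n).choose n) := min_le_right _ _
    rw [le_div_iff₀ (by positivity)] at this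
    nlinarith [mul_le_mul_of_nonneg_left ht1 ht0.le]
  exact ⟨_, _, lyapunovSolution_posDef n ht0 ht1, by positivity,
    dotProduct_riccati_lyapunovSolution_mulVec_nonpos hc ht0 hν (hlow t ht0 ht1) htν⟩

theorem primeA_eq_blockDiagonal (n m : ℕ) :
    primeA n m = blockDiagonal fun _ => shiftMatrix n := by
  ext ⟨i, a⟩ ⟨j, b⟩
  simp [primeA, shiftMatrix, blockDiagonal_apply, and_comm, ite_and]

theorem primeC_transpose_mul (n m : ℕ) :
    (primeC (n + 1) m)ᵀ * primeC (n + 1) m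
      = blockDiagonal fun _ => vecMulVec (Pi.single 0 1) (Pi.single 0 1) := by
  ext ⟨i, a⟩ ⟨j, b⟩
  simp [primeC, mul_apply, blockDiagonal_apply, vecMulVec_apply, Pi.single_apply, ite_and]
  split_ifs <;> simp_all

theorem primeB_mul_transpose (n m : ℕ) :
    primeB (n + 1) m * (primeB (n + 1) m)ᵀ
      = blockDiagonal fun _ => vecMulVec (Pi.single (Fin.last n) 1) (Pi.single (Fin.last n) 1) := by
  have hlast (i : Fin (n + 1)) : (i : ℕ) = n ↔ i = Fin.last n := by simp [Fin.ext_iff]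
  ext ⟨i, a⟩ ⟨j, b⟩
  simp [primeB, mul_apply, blockDiagonal_apply, vecMulVec_apply, Pi.single_apply, ite_and, hlast]
  split_ifs <;> simp_all

theorem stmt9_general (n_o m : ℕ) (hn : 1 ≤ n_o) (ν : ℝ) (hν : 0 < ν) :
    ∃ (PP : Matrix (Fin n_o × Fin m) (Fin n_o × Fin m) ℝ)
      (KK : Matrix (Fin n_o × Fin m) (Fin m) ℝ) (q : ℝ),
      PP.PosDef ∧ 0 < q ∧
      ∀ v : Fin n_o × Fin m → ℝ,
        v ⬝ᵥ ((PP * (primeA n_o m - KK * primeC n_o m)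
              + (primeA n_o m - KK * primeC n_o m)ᵀ * PP
              + (2 * q) • (1 : Matrix (Fin n_o × Fin m) (Fin n_o × Fin m) ℝ)
              + (1 / (q * ν ^ 2)) • (PP * primeB n_o m * (primeB n_o m)ᵀ * PP)) *ᵥ v)
          ≤ 0 := by
  obtain ⟨n, rfl⟩ : ∃ n, n_o = n + 1 := ⟨n_o - 1, by omega⟩
  obtain ⟨S, q, hS, hq, hR⟩ := exists_posDef_riccati_shiftMatrix n hν
  set P : Matrix (Fin (n + 1) × Fin m) (Fin (n + 1) × Fin m) ℝ := blockDiagonal fun _ => S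
  have hP : P.PosDef := PosDef.blockDiagonal fun _ => hS
  have hPt : Pᵀ = P := by simpa using hP.isHermitian.eq
  refine ⟨P, P⁻¹ * (primeC (n + 1) m)ᵀ, q, hP, hq, fun v => ?_⟩
  rw [mul_sub_inv_mul_add_transpose_mul hPt hP.det_pos.ne'.isUnit, Matrix.mul_assoc P,
    primeB_mul_transpose, primeC_transpose_mul, primeA_eq_blockDiagonal, ← blockDiagonal_one]
  simp only [P, blockDiagonal_transpose, ← blockDiagonal_mul, ← blockDiagonal_smul,
    ← blockDiagonal_add, ← blockDiagonal_sub, dotProduct_blockDiagonal_mulVec]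
  exact Finset.sum_nonpos fun _ _ => hR _

theorem stmt9 (n_o m : ℕ) (hn : 1 ≤ n_o) (hm : 1 ≤ m) (ν : ℝ) (hν : 0 < ν) :
    ∃ (PP : Matrix (Fin n_o × Fin m) (Fin n_o × Fin m) ℝ)
      (KK : Matrix (Fin n_o × Fin m) (Fin m) ℝ) (q : ℝ),
      PP.PosDef ∧ 0 < q ∧
      ∀ v : Fin n_o × Fin m → ℝ,
        v ⬝ᵥ ((PP * (primeA n_o m - KK * primeC n_o m)
              + (primeA n_o m - KK * primeC n_o m)ᵀ * PP
              + (2 * q) • (1 : Matrix (Fin n_o × Fin m) (Fin n_o × Fin m) ℝ)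
              + (1 / (q * ν ^ 2)) • (PP * primeB n_o m * (primeB n_o m)ᵀ * PP)) *ᵥ v)
          ≤ 0 :=
  stmt9_general n_o m hn ν hν
end

section
/- Consider the system ẋ = f(x) with f(x₁,x₂,x₃) = (x₂, −x₃x₁, 0) and output h(x) = x₁ on Ω = ℝ² × ℝ_{>0}. The map ℋ₄(x) = (x₁, x₂, −x₃x₁, −x₃x₂) = (h, L_f h, L_f²h, L_f³h)(x) is injective on Ω₄ = (ℝ²×ℝ_{>0}) \ ({(0,0)}×ℝ_{>0}), and its Jacobian Dℋ₄(x) has rank 3 at every point of Ω₄; moreover Ω₄ is invariant under the flow of f. In contrast, ℋ₃(x) = (x₁, x₂, −x₃x₁) is injective with full-rank Jacobian on Ω₃ = (ℝ\{0})×ℝ×ℝ_{>0}, but Ω₃ is not invariant under the flow of f. -/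
open Matrix

lemma proj_hfd (x : Fin 3 → ℝ) (j : Fin 3) :
    HasFDerivAt (fun y : Fin 3 → ℝ => y j)
      (ContinuousLinearMap.proj (R := ℝ) (φ := fun _ : Fin 3 => ℝ) j) x := by
  exact (ContinuousLinearMap.proj (R := ℝ) (φ := fun _ : Fin 3 => ℝ) j).hasFDerivAt

lemma neg_mul_hfd (x : Fin 3 → ℝ) (a b : Fin 3) :
    HasFDerivAt (fun y : Fin 3 → ℝ => -(y a * y b))
      (-(x a • (ContinuousLinearMap.proj (R := ℝ) (φ := fun _ : Fin 3 => ℝ) b)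
        + x b • (ContinuousLinearMap.proj (R := ℝ) (φ := fun _ : Fin 3 => ℝ) a))) x :=
  ((proj_hfd x a).mul (proj_hfd x b)).neg

lemma rank_eq_of_inj {m n : ℕ} (M : Matrix (Fin m) (Fin n) ℝ)
    (h : Function.Injective M.mulVecLin) : M.rank = n := by
  rw [Matrix.rank, LinearMap.finrank_range_of_inj h]
  simp

lemma jacH4_eq (H4 : (Fin 3 → ℝ) → (Fin 4 → ℝ))
    (hH4 : ∀ x, H4 x = ![x 0, x 1, -(x 2) * x 0, -(x 2) * x 1]) (x : Fin 3 → ℝ) :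
    jac H4 x = !![1,0,0; 0,1,0; -(x 2),0,-(x 0); 0,-(x 2),-(x 1)] := by
  have hfun : ∀ i, (fun y => H4 y i) = fun y : Fin 3 → ℝ =>
      (![y 0, y 1, -(y 2) * y 0, -(y 2) * y 1] : Fin 4 → ℝ) i := by
    intro i; funext y; rw [hH4]
  ext i j
  rw [jac, Matrix.of_apply, hfun i]
  fin_cases i
  · show fderiv ℝ (fun y : Fin 3 → ℝ => y 0) x (Pi.single j 1) = _
    rw [(proj_hfd x 0).fderiv]
    fin_cases j <;> simp [Pi.single_apply]
  · show fderiv ℝ (fun y : Fin 3 → ℝ => y 1) x (Pi.single j 1) = _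
    rw [(proj_hfd x 1).fderiv]
    fin_cases j <;> simp [Pi.single_apply]
  · show fderiv ℝ (fun y : Fin 3 → ℝ => -(y 2) * y 0) x (Pi.single j 1) = _
    rw [show (fun y : Fin 3 → ℝ => -(y 2) * y 0) = fun y : Fin 3 → ℝ => -(y 2 * y 0) by
      funext y; ring, (neg_mul_hfd x 2 0).fderiv]
    fin_cases j <;> simp [Pi.single_apply]
  · show fderiv ℝ (fun y : Fin 3 → ℝ => -(y 2) * y 1) x (Pi.single j 1) = _
    rw [show (fun y : Fin 3 → ℝ => -(y 2) * y 1) = fun y : Fin 3 → ℝ => -(y 2 * y 1) by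
      funext y; ring, (neg_mul_hfd x 2 1).fderiv]
    fin_cases j <;> simp [Pi.single_apply]

lemma jacH3_eq (H3 : (Fin 3 → ℝ) → (Fin 3 → ℝ))
    (hH3 : ∀ x, H3 x = ![x 0, x 1, -(x 2) * x 0]) (x : Fin 3 → ℝ) :
    jac H3 x = !![1,0,0; 0,1,0; -(x 2),0,-(x 0)] := by
  have hfun : ∀ i, (fun y => H3 y i) = fun y : Fin 3 → ℝ =>
      (![y 0, y 1, -(y 2) * y 0] : Fin 3 → ℝ) i := by
    intro i; funext y; rw [hH3]
  ext i j
  rw [jac, Matrix.of_apply, hfun i]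
  fin_cases i
  · show fderiv ℝ (fun y : Fin 3 → ℝ => y 0) x (Pi.single j 1) = _
    rw [(proj_hfd x 0).fderiv]
    fin_cases j <;> simp [Pi.single_apply]
  · show fderiv ℝ (fun y : Fin 3 → ℝ => y 1) x (Pi.single j 1) = _
    rw [(proj_hfd x 1).fderiv]
    fin_cases j <;> simp [Pi.single_apply]
  · show fderiv ℝ (fun y : Fin 3 → ℝ => -(y 2) * y 0) x (Pi.single j 1) = _
    rw [show (fun y : Fin 3 → ℝ => -(y 2) * y 0) = fun y : Fin 3 → ℝ => -(y 2 * y 0) by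
      funext y; ring, (neg_mul_hfd x 2 0).fderiv]
    fin_cases j <;> simp [Pi.single_apply]

theorem stmt16
    (f : (Fin 3 → ℝ) → (Fin 3 → ℝ)) (hf : ∀ x, f x = ![x 1, -(x 2) * x 0, 0])
    (H3 : (Fin 3 → ℝ) → (Fin 3 → ℝ)) (hH3 : ∀ x, H3 x = ![x 0, x 1, -(x 2) * x 0])
    (H4 : (Fin 3 → ℝ) → (Fin 4 → ℝ))
    (hH4 : ∀ x, H4 x = ![x 0, x 1, -(x 2) * x 0, -(x 2) * x 1])
    (Ω3 Ω4 : Set (Fin 3 → ℝ))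
    (hΩ3 : Ω3 = {x | x 0 ≠ 0 ∧ 0 < x 2})
    (hΩ4 : Ω4 = {x | 0 < x 2 ∧ ¬(x 0 = 0 ∧ x 1 = 0)}) :
    -- ℋ₄ is injective on Ω₄ with full-rank Jacobian
    (Set.InjOn H4 Ω4) ∧
    (∀ x ∈ Ω4, (jac H4 x).rank = 3) ∧
    -- Ω₄ is invariant under the flow of f
    (∀ x : ℝ → (Fin 3 → ℝ), (∀ t, HasDerivAt x (f (x t)) t) →
      x 0 ∈ Ω4 → ∀ t, x t ∈ Ω4) ∧
    -- ℋ₃ is injective on Ω₃ with full-rank Jacobian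
    (Set.InjOn H3 Ω3) ∧
    (∀ x ∈ Ω3, (jac H3 x).rank = 3) ∧
    -- but Ω₃ is not invariant under the flow of f
    (∃ (x : ℝ → (Fin 3 → ℝ)), (∀ t, HasDerivAt x (f (x t)) t) ∧
      x 0 ∈ Ω3 ∧ ∃ t : ℝ, x t ∉ Ω3) := by
  subst hΩ3 hΩ4
  refine ⟨?_, ?_, ?_, ?_, ?_, ?_⟩
  · -- InjOn H4
    intro a ha b hb hab
    rw [hH4 a, hH4 b] at hab
    have e0 : a 0 = b 0 := by have := congrFun hab 0; simpa using this
    have e1 : a 1 = b 1 := by have := congrFun hab 1; simpa using this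
    have e2 : a 2 * a 0 = b 2 * b 0 := by
      have := congrFun hab 2; simpa using this
    have e3 : a 2 * a 1 = b 2 * b 1 := by
      have := congrFun hab 3; simpa using this
    have hab2 : a 2 = b 2 := by
      rcases not_and_or.mp ha.2 with h | h
      · rw [e0] at e2
        exact mul_right_cancel₀ (e0 ▸ h) e2
      · rw [e1] at e3
        exact mul_right_cancel₀ (e1 ▸ h) e3
    funext i; fin_cases i <;> assumption
  · -- rank of jac H4
    intro x hx
    rw [jacH4_eq H4 hH4 x]
    apply rank_eq_of_inj
    rw [← LinearMap.ker_eq_bot, LinearMap.ker_eq_bot']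
    intro v hv
    rw [Matrix.mulVecLin_apply] at hv
    have e0 : v 0 = 0 := by
      have := congrFun hv 0
      simpa [Matrix.mulVec, dotProduct, Fin.sum_univ_three] using this
    have e1 : v 1 = 0 := by
      have := congrFun hv 1
      simpa [Matrix.mulVec, dotProduct, Fin.sum_univ_three] using this
    have e2 : -(x 2) * v 0 + -(x 0) * v 2 = 0 := by
      have := congrFun hv 2
      simpa [Matrix.mulVec, dotProduct, Fin.sum_univ_three] using this
    have e3 : -(x 2) * v 1 + -(x 1) * v 2 = 0 := by
      have := congrFun hv 3
      simpa [Matrix.mulVec, dotProduct, Fin.sum_univ_three] using this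
    have e2' : x 0 * v 2 = 0 := by rw [e0] at e2; linarith
    have e3' : x 1 * v 2 = 0 := by rw [e1] at e3; linarith
    have ev2 : v 2 = 0 := by
      rcases not_and_or.mp hx.2 with h | h
      · exact (mul_eq_zero.mp e2').resolve_left h
      · exact (mul_eq_zero.mp e3').resolve_left h
    funext i; fin_cases i <;> simp [e0, e1, ev2]
  · -- invariance of Ω4
    intro x hx hx0 t
    have hd : ∀ i s, HasDerivAt (fun u => x u i) (f (x s) i) s :=
      fun i s => hasDerivAt_pi.mp (hx s) i
    have h0' : ∀ s, HasDerivAt (fun u => x u 0) (x s 1) s := by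
      intro s; have := hd 0 s; rw [hf] at this; simpa using this
    have h1' : ∀ s, HasDerivAt (fun u => x u 1) (-(x s 2) * x s 0) s := by
      intro s; have := hd 1 s; rw [hf] at this; simpa using this
    have h2' : ∀ s, HasDerivAt (fun u => x u 2) 0 s := by
      intro s; have := hd 2 s; rw [hf] at this; simpa using this
    have h2const : ∀ s : ℝ, x s 2 = x 0 2 := by
      intro s
      exact is_const_of_deriv_eq_zero (fun u => (h2' u).differentiableAt)
        (fun u => (h2' u).deriv) s 0
    set c : ℝ := x 0 2 with hc
    have hcpos : 0 < c := hx0.1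
    set E : ℝ → ℝ := fun s => c * (x s 0) ^ 2 + (x s 1) ^ 2 with hE
    have hEd : ∀ s, HasDerivAt E 0 s := by
      intro s
      have h : HasDerivAt E
          (c * (2 * x s 0 ^ 1 * x s 1) + 2 * x s 1 ^ 1 * (-(x s 2) * x s 0)) s :=
        (((h0' s).pow 2).const_mul c).add ((h1' s).pow 2)
      have : c * (2 * x s 0 ^ 1 * x s 1) + 2 * x s 1 ^ 1 * (-(x s 2) * x s 0) = 0 := by
        rw [h2const s]; ring
      rwa [this] at h
    have hEconst : ∀ s : ℝ, E s = E 0 := by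
      intro s
      exact is_const_of_deriv_eq_zero (fun u => (hEd u).differentiableAt)
        (fun u => (hEd u).deriv) s 0
    have hE0 : 0 < E 0 := by
      show 0 < c * (x 0 0) ^ 2 + (x 0 1) ^ 2
      rcases not_and_or.mp hx0.2 with h | h
      · have h1 : 0 < (x 0 0) ^ 2 := by positivity
        nlinarith [sq_nonneg (x 0 1), mul_pos hcpos h1]
      · have h1 : 0 < (x 0 1) ^ 2 := by positivity
        nlinarith [mul_nonneg hcpos.le (sq_nonneg (x 0 0))]
    refine ⟨by rw [h2const t]; exact hcpos, ?_⟩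
    rintro ⟨ha, hb⟩
    have hEt : E t = 0 := by
      show c * (x t 0) ^ 2 + (x t 1) ^ 2 = 0
      rw [ha, hb]; ring
    rw [hEconst t] at hEt
    linarith [hE0, hEt.symm ▸ hE0]
  · -- InjOn H3
    intro a ha b hb hab
    rw [hH3 a, hH3 b] at hab
    have e0 : a 0 = b 0 := by have := congrFun hab 0; simpa using this
    have e1 : a 1 = b 1 := by have := congrFun hab 1; simpa using this
    have e2 : a 2 * a 0 = b 2 * b 0 := by
      have := congrFun hab 2; simpa using this
    have hab2 : a 2 = b 2 := by
      rw [e0] at e2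
      exact mul_right_cancel₀ (e0 ▸ ha.1) e2
    funext i; fin_cases i <;> assumption
  · -- rank of jac H3
    intro x hx
    rw [jacH3_eq H3 hH3 x]
    apply rank_eq_of_inj
    rw [← LinearMap.ker_eq_bot, LinearMap.ker_eq_bot']
    intro v hv
    rw [Matrix.mulVecLin_apply] at hv
    have e0 : v 0 = 0 := by
      have := congrFun hv 0
      simpa [Matrix.mulVec, dotProduct, Fin.sum_univ_three] using this
    have e1 : v 1 = 0 := by
      have := congrFun hv 1
      simpa [Matrix.mulVec, dotProduct, Fin.sum_univ_three] using this
    have e2 : -(x 2) * v 0 + -(x 0) * v 2 = 0 := by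
      have := congrFun hv 2
      simpa [Matrix.mulVec, dotProduct, Fin.sum_univ_three] using this
    have e2' : x 0 * v 2 = 0 := by rw [e0] at e2; linarith
    have ev2 : v 2 = 0 := (mul_eq_zero.mp e2').resolve_left hx.1
    funext i; fin_cases i <;> simp [e0, e1, ev2]
  · -- Ω3 not invariant
    refine ⟨fun t => ![Real.cos t, -Real.sin t, 1], ?_, ?_, Real.pi / 2, ?_⟩
    · intro t
      rw [hf]
      refine hasDerivAt_pi.mpr fun i => ?_
      fin_cases i
      · simpa using (Real.hasDerivAt_cos t)
      · have : HasDerivAt (fun t => -Real.sin t) (-Real.cos t) t :=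
          (Real.hasDerivAt_sin t).neg
        simpa using this
      · simpa using (hasDerivAt_const t (1 : ℝ))
    · constructor <;> simp
    · intro h
      have := h.1
      simp [Real.cos_pi_div_two] at this
end

section
/- Let λ > 0 and define, for x = (x₁,x₂,x₃) ∈ ℝ² × ℝ_{>0}, the symmetric matrix P(x) whose entries are: P₁₁ = (λ² + 2x₃)/(λ(λ² + 4x₃)), P₁₂ = −1/(λ² + 4x₃), P₂₂ = 2/(λ(λ² + 4x₃)), P₁₃ = (−λ³x₁ + (λ² − 4x₃)x₂)/(λ²(λ² + 4x₃)²), P₂₃ = ((3λ² + 4x₃)x₁ − 4λx₂)/(λ²(λ² + 4x₃)²), P₃₃ = (6λ⁴+12λ²x₃+16x₃²)/(λ³(λ²+4x₃)³)·x₁² − 4(5λ²+4x₃)/(λ²(λ²+4x₃)³)·x₁x₂ + 4(5λ²+4x₃)/(λ³(λ²+4x₃)³)·x₂². Then P satisfies the linear Lyapunov-type tensor equation L_f P(x) = Dh(x)ᵀDh(x) − λ P(x) for all x ∈ ℝ² × ℝ_{>0}, where f(x) = (x₂, −x₃x₁, 0) and h(x) = x₁. -/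
open Matrix

noncomputable def pr (i : Fin 3) : (Fin 3 → ℝ) →L[ℝ] ℝ := ContinuousLinearMap.proj i
lemma hpr (i : Fin 3) (x : Fin 3 → ℝ) : HasFDerivAt (fun y : Fin 3 → ℝ => y i) (pr i) x :=
  (pr i).hasFDerivAt

lemma hcomp2 (a : ℝ → ℝ) (x : Fin 3 → ℝ) (ha : DifferentiableAt ℝ a (x 2)) :
    HasFDerivAt (fun y : Fin 3 → ℝ => a (y 2)) (deriv a (x 2) • pr 2) x :=
  (ha.hasDerivAt).comp_hasFDerivAt x (hpr 2 x)

lemma key (a b c d e k : ℝ → ℝ) (x v : Fin 3 → ℝ) (hv : v 2 = 0)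
    (ha : DifferentiableAt ℝ a (x 2)) (hb : DifferentiableAt ℝ b (x 2))
    (hc : DifferentiableAt ℝ c (x 2)) (hd : DifferentiableAt ℝ d (x 2))
    (he : DifferentiableAt ℝ e (x 2)) (hk : DifferentiableAt ℝ k (x 2)) :
    fderiv ℝ (fun y => a (y 2) + b (y 2) * y 0 + c (y 2) * y 1 + d (y 2) * (y 0 * y 0)
      + e (y 2) * (y 0 * y 1) + k (y 2) * (y 1 * y 1)) x v
    = b (x 2) * v 0 + c (x 2) * v 1 + d (x 2) * (2 * x 0 * v 0)
      + e (x 2) * (x 0 * v 1 + x 1 * v 0) + k (x 2) * (2 * x 1 * v 1) := by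
  have H := (((((hcomp2 a x ha).add ((hcomp2 b x hb).mul (hpr 0 x))).add
      ((hcomp2 c x hc).mul (hpr 1 x))).add
      ((hcomp2 d x hd).mul ((hpr 0 x).mul (hpr 0 x)))).add
      ((hcomp2 e x he).mul ((hpr 0 x).mul (hpr 1 x)))).add
      ((hcomp2 k x hk).mul ((hpr 1 x).mul (hpr 1 x)))
  rw [HasFDerivAt.fderiv (f := fun y : Fin 3 → ℝ => a (y 2) + b (y 2) * y 0 + c (y 2) * y 1
    + d (y 2) * (y 0 * y 0) + e (y 2) * (y 0 * y 1) + k (y 2) * (y 1 * y 1)) H]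
  simp [pr, hv]
  ring

lemma jac_f (f : (Fin 3 → ℝ) → (Fin 3 → ℝ)) (hf : ∀ x, f x = ![x 1, -(x 2) * x 0, 0])
    (x : Fin 3 → ℝ) : jac f x = !![0,1,0; -(x 2),0,-(x 0); 0,0,0] := by
  have h0 : (fun y : Fin 3 → ℝ => f y 0) = fun y => y 1 := by funext y; rw [hf]; simp
  have h1 : (fun y : Fin 3 → ℝ => f y 1) = fun y => -(y 2 * y 0) := by
    funext y; rw [hf]; simp
  have h2 : (fun y : Fin 3 → ℝ => f y 2) = fun _ => (0:ℝ) := by funext y; rw [hf]; simp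
  have H1 : HasFDerivAt (fun y : Fin 3 → ℝ => -(y 2 * y 0)) (-(x 2 • pr 0 + x 0 • pr 2)) x :=
    ((hpr 2 x).mul (hpr 0 x)).neg
  ext i j
  fin_cases i <;> fin_cases j <;>
    simp [jac, h0, h1, h2, (hpr 1 x).fderiv, H1.fderiv, pr, Pi.single_apply,
      Matrix.vecHead, Matrix.vecTail]

lemma fin3_mk0 (h : 0 < 3) : (⟨0, h⟩ : Fin 3) = 0 := rfl
lemma fin3_mk1 (h : 1 < 3) : (⟨1, h⟩ : Fin 3) = 1 := rfl
lemma fin3_mk2 (h : 2 < 3) : (⟨2, h⟩ : Fin 3) = 2 := rfl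

set_option maxHeartbeats 2000000 in
theorem stmt19 (lam : ℝ) (hlam : 0 < lam)
    (f : (Fin 3 → ℝ) → (Fin 3 → ℝ)) (hf : ∀ x, f x = ![x 1, -(x 2) * x 0, 0])
    (P : (Fin 3 → ℝ) → Matrix (Fin 3) (Fin 3) ℝ)
    (hP : ∀ x : Fin 3 → ℝ,
      P x 0 0 = (lam^2 + 2 * x 2) / (lam * (lam^2 + 4 * x 2)) ∧
      P x 0 1 = -(1 / (lam^2 + 4 * x 2)) ∧
      P x 1 0 = P x 0 1 ∧
      P x 1 1 = 2 / (lam * (lam^2 + 4 * x 2)) ∧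
      P x 0 2 = (-(lam^3) * x 0 + (lam^2 - 4 * x 2) * x 1) / (lam^2 * (lam^2 + 4 * x 2)^2) ∧
      P x 2 0 = P x 0 2 ∧
      P x 1 2 = ((3 * lam^2 + 4 * x 2) * x 0 - 4 * lam * x 1) / (lam^2 * (lam^2 + 4 * x 2)^2) ∧
      P x 2 1 = P x 1 2 ∧
      P x 2 2 =
        (6 * lam^4 + 12 * lam^2 * x 2 + 16 * (x 2)^2) / (lam^3 * (lam^2 + 4 * x 2)^3) * (x 0)^2
        - 4 * (5 * lam^2 + 4 * x 2) / (lam^2 * (lam^2 + 4 * x 2)^3) * (x 0 * x 1)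
        + 4 * (5 * lam^2 + 4 * x 2) / (lam^3 * (lam^2 + 4 * x 2)^3) * (x 1)^2) :
    ∀ x : Fin 3 → ℝ, 0 < x 2 →
      lieD f P x = !![1, 0, 0; 0, 0, 0; 0, 0, 0] - lam • P x := by
  intro x hx
  have hL : lam ≠ 0 := ne_of_gt hlam
  have hD : lam ^ 2 + 4 * x 2 ≠ 0 := by positivity
  have hv2 : f x 2 = 0 := by rw [hf]; simp
  have hv0 : f x 0 = x 1 := by rw [hf]; simp
  have hv1 : f x 1 = -(x 2) * x 0 := by rw [hf]; simp
  have F00 : fderiv ℝ (fun y => P y 0 0) x (f x) = 0 := by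
    have E : (fun y => P y 0 0) = (fun y : Fin 3 → ℝ =>
        (fun t : ℝ => (lam^2 + 2*t)/(lam*(lam^2+4*t))) (y 2) + (fun _ : ℝ => (0:ℝ)) (y 2) * y 0 + (fun _ : ℝ => (0:ℝ)) (y 2) * y 1
        + (fun _ : ℝ => (0:ℝ)) (y 2) * (y 0 * y 0) + (fun _ : ℝ => (0:ℝ)) (y 2) * (y 0 * y 1) + (fun _ : ℝ => (0:ℝ)) (y 2) * (y 1 * y 1)) := by
      funext y; rw [(hP y).1]; ring
    rw [E, key (fun t : ℝ => (lam^2 + 2*t)/(lam*(lam^2+4*t))) (fun _ : ℝ => (0:ℝ)) (fun _ : ℝ => (0:ℝ)) (fun _ : ℝ => (0:ℝ)) (fun _ : ℝ => (0:ℝ)) (fun _ : ℝ => (0:ℝ)) x (f x) hv2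
      (by fun_prop (disch := positivity)) (by fun_prop (disch := positivity)) (by fun_prop (disch := positivity)) (by fun_prop (disch := positivity)) (by fun_prop (disch := positivity)) (by fun_prop (disch := positivity))]
    ring
  have F01 : fderiv ℝ (fun y => P y 0 1) x (f x) = 0 := by
    have E : (fun y => P y 0 1) = (fun y : Fin 3 → ℝ =>
        (fun t : ℝ => -((1:ℝ)/(lam^2+4*t))) (y 2) + (fun _ : ℝ => (0:ℝ)) (y 2) * y 0 + (fun _ : ℝ => (0:ℝ)) (y 2) * y 1
        + (fun _ : ℝ => (0:ℝ)) (y 2) * (y 0 * y 0) + (fun _ : ℝ => (0:ℝ)) (y 2) * (y 0 * y 1) + (fun _ : ℝ => (0:ℝ)) (y 2) * (y 1 * y 1)) := by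
      funext y; rw [(hP y).2.1]; ring
    rw [E, key (fun t : ℝ => -((1:ℝ)/(lam^2+4*t))) (fun _ : ℝ => (0:ℝ)) (fun _ : ℝ => (0:ℝ)) (fun _ : ℝ => (0:ℝ)) (fun _ : ℝ => (0:ℝ)) (fun _ : ℝ => (0:ℝ)) x (f x) hv2
      (by fun_prop (disch := positivity)) (by fun_prop (disch := positivity)) (by fun_prop (disch := positivity)) (by fun_prop (disch := positivity)) (by fun_prop (disch := positivity)) (by fun_prop (disch := positivity))]
    ring
  have F11 : fderiv ℝ (fun y => P y 1 1) x (f x) = 0 := by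
    have E : (fun y => P y 1 1) = (fun y : Fin 3 → ℝ =>
        (fun t : ℝ => 2/(lam*(lam^2+4*t))) (y 2) + (fun _ : ℝ => (0:ℝ)) (y 2) * y 0 + (fun _ : ℝ => (0:ℝ)) (y 2) * y 1
        + (fun _ : ℝ => (0:ℝ)) (y 2) * (y 0 * y 0) + (fun _ : ℝ => (0:ℝ)) (y 2) * (y 0 * y 1) + (fun _ : ℝ => (0:ℝ)) (y 2) * (y 1 * y 1)) := by
      funext y; rw [(hP y).2.2.2.1]; ring
    rw [E, key (fun t : ℝ => 2/(lam*(lam^2+4*t))) (fun _ : ℝ => (0:ℝ)) (fun _ : ℝ => (0:ℝ)) (fun _ : ℝ => (0:ℝ)) (fun _ : ℝ => (0:ℝ)) (fun _ : ℝ => (0:ℝ)) x (f x) hv2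
      (by fun_prop (disch := positivity)) (by fun_prop (disch := positivity)) (by fun_prop (disch := positivity)) (by fun_prop (disch := positivity)) (by fun_prop (disch := positivity)) (by fun_prop (disch := positivity))]
    ring
  have F02 : fderiv ℝ (fun y => P y 0 2) x (f x) = -(lam^3)/(lam^2*(lam^2+4*x 2)^2) * x 1 + (lam^2-4*x 2)/(lam^2*(lam^2+4*x 2)^2) * (-(x 2) * x 0) := by
    have E : (fun y => P y 0 2) = (fun y : Fin 3 → ℝ =>
        (fun _ : ℝ => (0:ℝ)) (y 2) + (fun t : ℝ => -(lam^3)/(lam^2*(lam^2+4*t)^2)) (y 2) * y 0 + (fun t : ℝ => (lam^2-4*t)/(lam^2*(lam^2+4*t)^2)) (y 2) * y 1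
        + (fun _ : ℝ => (0:ℝ)) (y 2) * (y 0 * y 0) + (fun _ : ℝ => (0:ℝ)) (y 2) * (y 0 * y 1) + (fun _ : ℝ => (0:ℝ)) (y 2) * (y 1 * y 1)) := by
      funext y; rw [(hP y).2.2.2.2.1]; ring
    rw [E, key (fun _ : ℝ => (0:ℝ)) (fun t : ℝ => -(lam^3)/(lam^2*(lam^2+4*t)^2)) (fun t : ℝ => (lam^2-4*t)/(lam^2*(lam^2+4*t)^2)) (fun _ : ℝ => (0:ℝ)) (fun _ : ℝ => (0:ℝ)) (fun _ : ℝ => (0:ℝ)) x (f x) hv2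
      (by fun_prop (disch := positivity)) (by fun_prop (disch := positivity)) (by fun_prop (disch := positivity)) (by fun_prop (disch := positivity)) (by fun_prop (disch := positivity)) (by fun_prop (disch := positivity))]
    rw [hv0, hv1]; ring
  have F12 : fderiv ℝ (fun y => P y 1 2) x (f x) = (3*lam^2+4*x 2)/(lam^2*(lam^2+4*x 2)^2) * x 1 + -(4*lam)/(lam^2*(lam^2+4*x 2)^2) * (-(x 2) * x 0) := by
    have E : (fun y => P y 1 2) = (fun y : Fin 3 → ℝ =>
        (fun _ : ℝ => (0:ℝ)) (y 2) + (fun t : ℝ => (3*lam^2+4*t)/(lam^2*(lam^2+4*t)^2)) (y 2) * y 0 + (fun t : ℝ => -(4*lam)/(lam^2*(lam^2+4*t)^2)) (y 2) * y 1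
        + (fun _ : ℝ => (0:ℝ)) (y 2) * (y 0 * y 0) + (fun _ : ℝ => (0:ℝ)) (y 2) * (y 0 * y 1) + (fun _ : ℝ => (0:ℝ)) (y 2) * (y 1 * y 1)) := by
      funext y; rw [(hP y).2.2.2.2.2.2.1]; ring
    rw [E, key (fun _ : ℝ => (0:ℝ)) (fun t : ℝ => (3*lam^2+4*t)/(lam^2*(lam^2+4*t)^2)) (fun t : ℝ => -(4*lam)/(lam^2*(lam^2+4*t)^2)) (fun _ : ℝ => (0:ℝ)) (fun _ : ℝ => (0:ℝ)) (fun _ : ℝ => (0:ℝ)) x (f x) hv2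
      (by fun_prop (disch := positivity)) (by fun_prop (disch := positivity)) (by fun_prop (disch := positivity)) (by fun_prop (disch := positivity)) (by fun_prop (disch := positivity)) (by fun_prop (disch := positivity))]
    rw [hv0, hv1]; ring
  have F22 : fderiv ℝ (fun y => P y 2 2) x (f x) = (6*lam^4+12*lam^2*x 2+16*(x 2)^2)/(lam^3*(lam^2+4*x 2)^3) * (2 * x 0 * x 1) + -(4*(5*lam^2+4*x 2))/(lam^2*(lam^2+4*x 2)^3) * (x 0 * (-(x 2) * x 0) + x 1 * x 1) + 4*(5*lam^2+4*x 2)/(lam^3*(lam^2+4*x 2)^3) * (2 * x 1 * (-(x 2) * x 0)) := by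
    have E : (fun y => P y 2 2) = (fun y : Fin 3 → ℝ =>
        (fun _ : ℝ => (0:ℝ)) (y 2) + (fun _ : ℝ => (0:ℝ)) (y 2) * y 0 + (fun _ : ℝ => (0:ℝ)) (y 2) * y 1
        + (fun t : ℝ => (6*lam^4+12*lam^2*t+16*t^2)/(lam^3*(lam^2+4*t)^3)) (y 2) * (y 0 * y 0) + (fun t : ℝ => -(4*(5*lam^2+4*t))/(lam^2*(lam^2+4*t)^3)) (y 2) * (y 0 * y 1) + (fun t : ℝ => 4*(5*lam^2+4*t)/(lam^3*(lam^2+4*t)^3)) (y 2) * (y 1 * y 1)) := by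
      funext y; rw [(hP y).2.2.2.2.2.2.2.2]; ring
    rw [E, key (fun _ : ℝ => (0:ℝ)) (fun _ : ℝ => (0:ℝ)) (fun _ : ℝ => (0:ℝ)) (fun t : ℝ => (6*lam^4+12*lam^2*t+16*t^2)/(lam^3*(lam^2+4*t)^3)) (fun t : ℝ => -(4*(5*lam^2+4*t))/(lam^2*(lam^2+4*t)^3)) (fun t : ℝ => 4*(5*lam^2+4*t)/(lam^3*(lam^2+4*t)^3)) x (f x) hv2
      (by fun_prop (disch := positivity)) (by fun_prop (disch := positivity)) (by fun_prop (disch := positivity)) (by fun_prop (disch := positivity)) (by fun_prop (disch := positivity)) (by fun_prop (disch := positivity))]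
    rw [hv0, hv1]; ring
  have F10 : fderiv ℝ (fun y => P y 1 0) x (f x) = 0 := by
    rw [show (fun y => P y 1 0) = fun y => P y 0 1 from funext fun y => (hP y).2.2.1]
    exact F01
  have F20 : fderiv ℝ (fun y => P y 2 0) x (f x)
      = -(lam^3)/(lam^2*(lam^2+4*x 2)^2) * x 1
        + (lam^2-4*x 2)/(lam^2*(lam^2+4*x 2)^2) * (-(x 2) * x 0) := by
    rw [show (fun y => P y 2 0) = fun y => P y 0 2 from funext fun y => (hP y).2.2.2.2.2.1]
    exact F02
  have F21 : fderiv ℝ (fun y => P y 2 1) x (f x)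
      = (3*lam^2+4*x 2)/(lam^2*(lam^2+4*x 2)^2) * x 1
        + -(4*lam)/(lam^2*(lam^2+4*x 2)^2) * (-(x 2) * x 0) := by
    rw [show (fun y => P y 2 1) = fun y => P y 1 2 from funext fun y => (hP y).2.2.2.2.2.2.2.1]
    exact F12
  obtain ⟨p00, p01, p10, p11, p02, p20, p12, p21, p22⟩ := hP x
  have hj := jac_f f hf x
  rw [show lieD f P x = (Matrix.of fun i j => fderiv ℝ (fun y => P y i j) x (f x))
      + P x * jac f x + (jac f x)ᵀ * P x from rfl]
  ext i j
  fin_cases i <;> fin_cases j <;>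
  · simp only [fin3_mk0, fin3_mk1, fin3_mk2, hj, Matrix.add_apply, Matrix.of_apply, Matrix.mul_apply,
      Matrix.transpose_apply, Fin.sum_univ_three, Matrix.sub_apply, Matrix.smul_apply,
      smul_eq_mul, Fin.isValue, F00, F01, F10, F11, F02, F20, F12, F21, F22,
      p00, p01, p10, p11, p02, p20, p12, p21, p22,
      Matrix.cons_val', Matrix.cons_val_zero, Matrix.cons_val_one, Matrix.head_cons,
      Matrix.empty_val', Matrix.cons_val_fin_one, Matrix.head_fin_const,
      Matrix.cons_val_two, Matrix.tail_cons]
    field_simp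
    ring
end
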